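/- Let f^l, f^r : ℝ → ℝ be continuous and let G, Ĝ be maximal L1-dissipative germs. Define ρ(G, Ĝ) = max{0, sup{q^r(b^r, b̂^r) − q^l(b^l, b̂^l) : (b^l,b^r) ∈ G, (b̂^l,b̂^r) ∈ Ĝ}}. If ρ(G, Ĝ) = 0 then G = Ĝ. -/
import Mathlib


noncomputable section

/-- Kruzhkov entropy flux `q(a,b) = sign(a-b)(f(a)-f(b))`. -/
def qflux (f : ℝ → ℝ) (a b : ℝ) : ℝ := Real.sign (a - b) * (f a - f b)

/-- A germ: a set of pairs in `U × U` satisfying the Rankine–Hugoniot condition. -/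
def IsGerm (U : Set ℝ) (fl fr : ℝ → ℝ) (G : Set (ℝ × ℝ)) : Prop :=
  G ⊆ U ×ˢ U ∧ ∀ p ∈ G, fl p.1 = fr p.2

/-- An L1-dissipative germ. -/
def IsL1D (U : Set ℝ) (fl fr : ℝ → ℝ) (G : Set (ℝ × ℝ)) : Prop :=
  IsGerm U fl fr G ∧ ∀ p ∈ G, ∀ p' ∈ G, qflux fr p.2 p'.2 ≤ qflux fl p.1 p'.1

/-- The dual germ `G*`. -/
def dualGerm (U : Set ℝ) (fl fr : ℝ → ℝ) (G : Set (ℝ × ℝ)) : Set (ℝ × ℝ) :=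
  {p | p ∈ U ×ˢ U ∧ fl p.1 = fr p.2 ∧
    ∀ p' ∈ G, qflux fr p'.2 p.2 ≤ qflux fl p'.1 p.1}

/-- A maximal L1-dissipative germ. -/
def MaximalL1D (U : Set ℝ) (fl fr : ℝ → ℝ) (G : Set (ℝ × ℝ)) : Prop :=
  IsL1D U fl fr G ∧ ∀ G', IsL1D U fl fr G' → G ⊆ G' → G' = G

/-- A definite germ: an L1D germ with a unique maximal L1D extension. -/
def Definite (U : Set ℝ) (fl fr : ℝ → ℝ) (G : Set (ℝ × ℝ)) : Prop :=
  IsL1D U fl fr G ∧ ∃! M, MaximalL1D U fl fr M ∧ G ⊆ M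

lemma qflux_symm (f : ℝ → ℝ) (a b : ℝ) : qflux f a b = qflux f b a := by
  unfold qflux
  have : b - a = -(a - b) := by ring
  rw [this, Real.sign_neg]
  ring

lemma mem_of_dual (U : Set ℝ) (fl fr : ℝ → ℝ) (G : Set (ℝ × ℝ))
    (hG : MaximalL1D U fl fr G) {p : ℝ × ℝ}
    (hp : p ∈ dualGerm U fl fr G) : p ∈ G := by
  obtain ⟨⟨⟨hsub, hRH⟩, hdiss⟩, hmax⟩ := hG
  obtain ⟨hpU, hpRH, hpq⟩ := hp
  have h1 : IsL1D U fl fr (insert p G) := by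
    refine ⟨⟨?_, ?_⟩, ?_⟩
    · intro x hx
      rcases hx with rfl | hx
      · exact hpU
      · exact hsub hx
    · intro x hx
      rcases hx with rfl | hx
      · exact hpRH
      · exact hRH x hx
    · intro x hx y hy
      rcases hx with rfl | hx <;> rcases hy with rfl | hy
      · simp [qflux]
      · rw [qflux_symm fr, qflux_symm fl]; exact hpq y hy
      · exact hpq x hx
      · exact hdiss x hx y hy
  have := hmax _ h1 (Set.subset_insert p G)
  rw [← this]; exact Set.mem_insert p G

theorem maximal_germs_eq_of_rho_zero
    (fl fr : ℝ → ℝ) (hfl : Continuous fl) (hfr : Continuous fr)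
    (G Ghat : Set (ℝ × ℝ))
    (hG : MaximalL1D Set.univ fl fr G) (hGhat : MaximalL1D Set.univ fl fr Ghat)
    (hrho : ∀ p ∈ G, ∀ q ∈ Ghat, qflux fr p.2 q.2 ≤ qflux fl p.1 q.1) :
    G = Ghat := by
  apply Set.Subset.antisymm
  · intro p hp
    apply mem_of_dual Set.univ fl fr Ghat hGhat
    refine ⟨by simp, hG.1.1.2 p hp, fun q hq => ?_⟩
    rw [qflux_symm fr, qflux_symm fl]
    exact hrho p hp q hq
  · intro q hq
    apply mem_of_dual Set.univ fl fr G hG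
    refine ⟨by simp, hGhat.1.1.2 q hq, fun p hp => ?_⟩
    exact hrho p hp q hq
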